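/- arXiv:1201.2953 — 5 statements merged into one kernel-verified Lean document; each statement's English description precedes it below -/
import Mathlib

section
/- (Poisson lower tail bound) If X is a Poisson random variable with mean λ > 0 and 0 ≤ k ≤ λ, then P(X ≤ k) ≤ exp(−λ · H(k/λ)), where H(x) = x·ln x − x + 1 and H(0) = 1. -/
open ProbabilityTheory
open scoped NNReal

noncomputable def H (x : ℝ) : ℝ := x * Real.log x - x + 1

/-!
Chernoff's method with the probability generating function `E[r^X] = exp (λ (r - 1))` of
`X ∼ Po(λ)`: for `0 ≤ r ≤ 1` the weight `r ^ j` is at least `r ^ k` on `{j ≤ k}`, so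
`r ^ k P(X ≤ k) ≤ exp (λ (r - 1))`. The choice `r = k / λ` turns the right-hand side into
`r ^ k exp (-λ H(r))`, and `r ^ k > 0` even for `k = 0` because `0 ^ 0 = 1`.
-/

open Real
open scoped Nat

lemma hasSum_poissonPMFReal_mul_pow (lam : ℝ≥0) (r : ℝ) :
    HasSum (fun n : ℕ ↦ poissonPMFReal lam n * r ^ n) (exp (lam * (r - 1))) := by
  have hexp := (NormedSpace.expSeries_div_hasSum_exp ((lam : ℝ) * r)).mul_left (exp (-lam))
  rw [← exp_eq_exp_ℝ, ← exp_add] at hexp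
  have hterm (n : ℕ) : poissonPMFReal lam n * r ^ n = exp (-lam) * ((lam * r) ^ n / n !) := by
    simp only [poissonPMFReal, mul_pow]
    ring
  simpa only [hterm, show (lam : ℝ) * (r - 1) = -lam + lam * r by ring] using hexp

lemma rpow_mul_tsum_poissonPMFReal_le (lam : ℝ≥0) (k : ℝ) {r : ℝ} (hr0 : 0 ≤ r)
    (hr1 : r ≤ 1) :
    r ^ k * ∑' j : {j : ℕ // (j : ℝ) ≤ k}, poissonPMFReal lam j ≤ exp (lam * (r - 1)) := by
  have hpgf := hasSum_poissonPMFReal_mul_pow lam r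
  rw [← tsum_mul_left, ← hpgf.tsum_eq]
  refine Summable.tsum_le_tsum_of_inj Subtype.val Subtype.val_injective
    (fun n _ ↦ mul_nonneg poissonPMFReal_nonneg (pow_nonneg hr0 n)) (fun j ↦ ?_)
    (((hasSum_one_poissonMeasure lam).summable.subtype _).mul_left _) hpgf.summable
  have hpow : r ^ k ≤ r ^ (j : ℕ) := by
    rw [← rpow_natCast]
    exact rpow_le_rpow_of_exponent_ge' hr0 hr1 (Nat.cast_nonneg _) j.2
  rw [mul_comm]
  exact mul_le_mul_of_nonneg_left hpow poissonPMFReal_nonneg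

lemma rpow_mul_mul_exp_neg_mul_H (lam : ℝ) {r : ℝ} (hr : 0 ≤ r) :
    r ^ (lam * r) * exp (-lam * H r) = exp (lam * (r - 1)) := by
  rcases hr.eq_or_lt with rfl | hr
  · simp [H]
  · rw [rpow_def_of_pos hr, ← exp_add, H]
    ring_nf

theorem poisson_lower_tail_general (lam : ℝ≥0) (k : ℝ) (hk0 : 0 ≤ k)
    (hk : k ≤ (lam : ℝ)) :
    (∑' j : {j : ℕ // (j : ℝ) ≤ k}, poissonPMFReal lam j) ≤
      Real.exp (-(lam : ℝ) * H (k / lam)) := by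
  have hlam : (0 : ℝ) ≤ lam := lam.2
  set r := k / (lam : ℝ)
  have hr0 : 0 ≤ r := div_nonneg hk0 hlam
  have hk_eq : (lam : ℝ) * r = k :=
    mul_div_cancel_of_imp' fun h ↦ le_antisymm (hk.trans_eq h) hk0
  have hrk_pos : 0 < r ^ k := by
    rcases hk0.eq_or_lt with rfl | hk_pos
    · simp
    · exact rpow_pos_of_pos (div_pos hk_pos (hk_pos.trans_le hk)) k
  have hchernoff := rpow_mul_tsum_poissonPMFReal_le lam k hr0 (div_le_one_of_le₀ hk hlam)
  rw [← rpow_mul_mul_exp_neg_mul_H lam hr0, hk_eq] at hchernoff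
  exact le_of_mul_le_mul_left hchernoff hrk_pos

/-- Poisson lower tail bound: `P(Po(λ) ≤ k) ≤ exp (-λ H(k/λ))` for `0 ≤ k ≤ λ`. -/
theorem poisson_lower_tail (lam : ℝ≥0) (k : ℝ) (hlam : 0 < lam) (hk0 : 0 ≤ k)
    (hk : k ≤ (lam : ℝ)) :
    (∑' j : {j : ℕ // (j : ℝ) ≤ k}, poissonPMFReal lam j) ≤
      Real.exp (-(lam : ℝ) * H (k / lam)) :=
  poisson_lower_tail_general lam k hk0 hk
end

section
/- Let a > 0, γ > 0, D = a·ln n, and p = γ/x₂ where x₂ > 1 is the unique solution in (1, ∞) of J(x) = 1/(aγ) with J(x) = ln x − 1 + 1/x. Then for any p' with 0 < p' < p, we have p'·a·H(γ/p') > 1, where H(x) = x·ln x − x + 1. -/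
noncomputable def J (x : ℝ) : ℝ := Real.log x - 1 + 1 / x

lemma H_eq_mul_J {x : ℝ} (hx : x ≠ 0) : H x = x * J x := by
  simp only [H, J]
  field_simp

/-- For `1 ≤ x < y`: `log (y / x) > 1 - x / y = (y - x) / y ≥ (y - x) / (x * y) = 1 / x - 1 / y`. -/
lemma J_strictMonoOn : StrictMonoOn J (Set.Ici 1) := by
  intro x (hx : 1 ≤ x) y (hy : 1 ≤ y) hxy
  have hx0 : 0 < x := by linarith
  have hy0 : 0 < y := by linarith
  have hlog : Real.log (x / y) < x / y - 1 :=
    Real.log_lt_sub_one_of_pos (by positivity) (div_lt_one hy0 |>.mpr hxy).ne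
  have hquot : (y - x) / (x * y) ≤ 1 - x / y := by
    rw [div_le_iff₀ (by positivity)]
    field_simp
    nlinarith
  rw [Real.log_div hx0.ne' hy0.ne'] at hlog
  have hrecip : 1 / x - 1 / y = (y - x) / (x * y) := by field_simp
  simp only [J]
  linarith

theorem stable_condition_below_pprime (a γ x₂ p : ℝ) (ha : 0 < a) (hγ : 0 < γ)
    (hx₂ : 1 < x₂) (hroot : J x₂ = 1 / (a * γ)) (hp : p = γ / x₂) :
    ∀ p' : ℝ, 0 < p' → p' < p → 1 < p' * a * H (γ / p') := by
  intro p' hp' hp'p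
  have hx₂_lt : x₂ < γ / p' := by
    rw [hp, lt_div_iff₀ (by linarith)] at hp'p
    rwa [lt_div_iff₀ hp', mul_comm]
  have hJ : J x₂ < J (γ / p') :=
    J_strictMonoOn hx₂.le (hx₂.trans hx₂_lt).le hx₂_lt
  have haγ : 0 < a * γ := mul_pos ha hγ
  calc 1 = a * γ * J x₂ := by rw [hroot]; field_simp
    _ < a * γ * J (γ / p') := mul_lt_mul_of_pos_left hJ haγ
    _ = p' * a * H (γ / p') := by
      rw [H_eq_mul_J (by positivity)]
      field_simp
end

section
/- The function x ↦ −ln(x · J_R⁻¹(x)) is strictly decreasing on (0, ∞), where J_R⁻¹ is the inverse of J(x) = ln x − 1 + 1/x restricted to [1, ∞). Consequently, p'(a, γ) = γ / J_R⁻¹(1/(aγ)) is strictly increasing in a for fixed γ > 0. -/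
/-- Inverse of `J` restricted to `[1,∞)`. -/
noncomputable def JRinv (y : ℝ) : ℝ := Function.invFunOn J (Set.Ici 1) y

lemma J_hasDerivAt {x : ℝ} (hx : 0 < x) :
    HasDerivAt J (x⁻¹ - (x ^ 2)⁻¹) x := by
  have h1 := Real.hasDerivAt_log hx.ne'
  have h2 := hasDerivAt_inv hx.ne'
  have h := (h1.sub_const 1).add h2
  have : x⁻¹ - (x ^ 2)⁻¹ = x⁻¹ + -(x ^ 2)⁻¹ := by ring
  rw [this]
  have hJ : J = fun x => Real.log x - 1 + x⁻¹ := by funext t; simp [J, one_div]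
  rw [hJ]
  exact h

lemma J_surj : Set.Ici (0:ℝ) ⊆ J '' Set.Ici 1 := by
  intro y hy
  have hy0 : (0:ℝ) ≤ y := hy
  set b := Real.exp (y + 1) with hb
  have hb1 : (1:ℝ) ≤ b := Real.one_le_exp (by linarith)
  have hb0 : (0:ℝ) < b := lt_of_lt_of_le one_pos hb1
  have hJ1 : J 1 = 0 := by simp [J]
  have hJb : y ≤ J b := by
    have hlog : Real.log b = y + 1 := Real.log_exp _
    have : (0:ℝ) < 1 / b := by positivity
    simp only [J, hlog]
    linarith
  have hcont : ContinuousOn J (Set.Icc 1 b) := by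
    intro x hx
    have hx0 : 0 < x := lt_of_lt_of_le one_pos hx.1
    exact (J_hasDerivAt hx0).continuousAt.continuousWithinAt
  have := intermediate_value_Icc hb1 hcont
  have hmem : y ∈ Set.Icc (J 1) (J b) := by
    rw [hJ1]; exact ⟨hy0, hJb⟩
  obtain ⟨x, hx, hJx⟩ := this hmem
  exact ⟨x, hx.1, hJx⟩

lemma JRinv_spec {y : ℝ} (hy : 0 ≤ y) :
    JRinv y ∈ Set.Ici 1 ∧ J (JRinv y) = y := by
  obtain ⟨a, ha, hfa⟩ := J_surj hy
  exact ⟨Function.invFunOn_mem ⟨a, ha, hfa⟩, Function.invFunOn_eq ⟨a, ha, hfa⟩⟩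

lemma JRinv_lt {u v : ℝ} (hu : 0 ≤ u) (hv : 0 ≤ v) (huv : u < v) :
    JRinv u < JRinv v := by
  obtain ⟨hmu, hJu⟩ := JRinv_spec hu
  obtain ⟨hmv, hJv⟩ := JRinv_spec hv
  by_contra h
  push_neg at h
  have := J_strictMonoOn.monotoneOn hmv hmu h
  rw [hJu, hJv] at this
  linarith

theorem pprime_monotone :
    StrictAntiOn (fun x : ℝ => -Real.log (x * JRinv x)) (Set.Ioi 0) ∧
    ∀ γ : ℝ, 0 < γ →
      StrictMonoOn (fun a : ℝ => γ / JRinv (1 / (a * γ))) (Set.Ioi 0) := by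
  constructor
  · intro x hx y hy hxy
    have hx0 : (0:ℝ) < x := hx
    have hy0 : (0:ℝ) < y := hy
    obtain ⟨h1x, _⟩ := JRinv_spec hx0.le
    obtain ⟨h1y, _⟩ := JRinv_spec hy0.le
    have h1x' : (1:ℝ) ≤ JRinv x := h1x
    have h1y' : (1:ℝ) ≤ JRinv y := h1y
    have hle : JRinv x < JRinv y := JRinv_lt hx0.le hy0.le hxy
    have hlt : x * JRinv x < y * JRinv y := by nlinarith
    have hpos : 0 < x * JRinv x := by nlinarith
    simp only
    exact neg_lt_neg (Real.log_lt_log hpos hlt)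
  · intro γ hγ a ha b hb hab
    have ha0 : (0:ℝ) < a := ha
    have hb0 : (0:ℝ) < b := hb
    have haγ : (0:ℝ) < a * γ := by positivity
    have hbγ : (0:ℝ) < b * γ := by positivity
    have hinv : 1 / (b * γ) < 1 / (a * γ) :=
      one_div_lt_one_div_of_lt haγ (mul_lt_mul_of_pos_right hab hγ)
    have hkey : JRinv (1 / (b * γ)) < JRinv (1 / (a * γ)) :=
      JRinv_lt (by positivity) (by positivity) hinv
    have hc : (0:ℝ) < JRinv (1 / (b * γ)) :=
      lt_of_lt_of_le one_pos (JRinv_spec (by positivity)).1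
    simp only
    exact div_lt_div_of_pos_left hγ hc hkey
end

section
/- (Bahadur–Rao for Poisson) Let α > 0 be such that a centered unit Poisson variable takes value α with positive probability (i.e., α ∈ ℕ in the shifted lattice, equivalently 1 + α ∈ ℕ, 1 + α ≥ 1). Then lim_{N→∞, N ∈ ℕ} P(Po(N) − N ≥ α·N) · exp(N·I(α)) · √N = √(1+α)/(α·√(2π)), where I(α) = (1+α)·ln(1+α) − α. -/
open ProbabilityTheory
open scoped NNReal

noncomputable def I (α : ℝ) : ℝ := (1 + α) * Real.log (1 + α) - α

/-
Put `k = (1 + α) N`. The tail is `p_N(k) · ∑ᵢ p_N(k + i) / p_N(k)`, and the ratios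
`N^i k! / (k + i)!` converge termwise to `(1 + α)⁻ⁱ` while being dominated by it, so the
sum tends to `(1 + α) / α`. Stirling's formula `k! ~ √(2πk) (k/e)^k` turns the leading
weight into `p_N(k) ~ e^{-N I(α)} / √(2π (1 + α) N)`; the product of the two limits is the
claimed constant.
-/

set_option linter.deprecated false

open Filter Real Topology Nat Stirling

lemma tsum_subtype_natCast_le {M : Type*} [AddCommMonoid M] [TopologicalSpace M]
    (f : ℕ → M) (k : ℕ) :
    ∑' j : {j : ℕ // (k : ℝ) ≤ j}, f j = ∑' i, f (k + i) := by
  let e : ℕ ≃ {j : ℕ // (k : ℝ) ≤ j} :=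
    { toFun i := ⟨k + i, by simp⟩
      invFun j := j.1 - k
      left_inv i := by simp
      right_inv j := Subtype.ext (Nat.add_sub_cancel' (by exact_mod_cast j.2)) }
  exact (e.tsum_eq fun j => f j).symm

noncomputable def poissonRatio (r : ℝ) (k i : ℕ) : ℝ := r ^ i * k ! / (k + i)!

lemma poissonPMFReal_add (r : ℝ≥0) (k i : ℕ) :
    poissonPMFReal r (k + i) = poissonPMFReal r k * poissonRatio r k i := by
  have hk : (k ! : ℝ) ≠ 0 := by positivity
  have hki : ((k + i)! : ℝ) ≠ 0 := by positivity
  unfold poissonPMFReal poissonRatio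
  rw [pow_add]
  field_simp

lemma poissonRatio_zero (r : ℝ) (k : ℕ) : poissonRatio r k 0 = 1 := by
  have hk : (k ! : ℝ) ≠ 0 := by positivity
  simp [poissonRatio, hk]

lemma poissonRatio_succ (r : ℝ) (k i : ℕ) :
    poissonRatio r k (i + 1) = poissonRatio r k i * (r / (k + i + 1)) := by
  have hki : ((k + i)! : ℝ) ≠ 0 := by positivity
  have hpos : (k : ℝ) + i + 1 ≠ 0 := by positivity
  unfold poissonRatio
  rw [← add_assoc, factorial_succ, pow_succ]
  push_cast
  field_simp

lemma poissonRatio_nonneg {r : ℝ} (hr : 0 ≤ r) (k i : ℕ) : 0 ≤ poissonRatio r k i := by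
  unfold poissonRatio
  positivity

lemma poissonRatio_le_pow {r c : ℝ} {k : ℕ} (hr : 0 ≤ r) (hrc : r ≤ c * (k + 1)) (i : ℕ) :
    poissonRatio r k i ≤ c ^ i := by
  induction i with
  | zero => simp [poissonRatio_zero]
  | succ i ih =>
    have hfactor : r / (k + i + 1) ≤ c := by
      rw [div_le_iff₀ (by positivity)]
      nlinarith [(by positivity : (0 : ℝ) ≤ i), hr.trans hrc]
    rw [poissonRatio_succ, pow_succ]
    exact mul_le_mul ih hfactor (by positivity) ((poissonRatio_nonneg hr k i).trans ih)

lemma poissonPMFReal_eq_stirlingSeq (r : ℝ≥0) {k : ℕ} (hk : k ≠ 0) :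
    poissonPMFReal r k = exp (k - r) * (r / k) ^ k / (stirlingSeq k * √(2 * k)) := by
  have hk' : (0 : ℝ) < k := Nat.cast_pos.2 (Nat.pos_of_ne_zero hk)
  have hfac : (k ! : ℝ) = stirlingSeq k * √(2 * k) * (k ^ k / exp k) := by
    rw [stirlingSeq, div_pow, ← exp_nat_mul, mul_one]
    field_simp
  rw [poissonPMFReal, hfac, exp_sub, exp_neg, div_pow]
  field_simp

lemma poissonPMFReal_mul_exp_mul_sqrt {α : ℝ} (hα : -1 < α) {N k : ℕ} (hN : N ≠ 0)
    (hk : (k : ℝ) = (1 + α) * N) :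
    poissonPMFReal N k * exp (N * I α) * √N = (stirlingSeq k * √(2 * (1 + α)))⁻¹ := by
  have hN' : (0 : ℝ) < N := Nat.cast_pos.2 (Nat.pos_of_ne_zero hN)
  have hα' : 0 < 1 + α := by linarith
  have hk0 : k ≠ 0 := Nat.cast_ne_zero.1 (hk ▸ (mul_pos hα' hN').ne')
  -- `(N / k)^k = (1 + α)^{-k}`: this is where `I(α)` comes from.
  have hexp : exp (k - N) * (N / k) ^ k * exp (N * I α) = 1 := by
    have hratio : (N : ℝ) / k = exp (-log (1 + α)) := by
      rw [exp_neg, exp_log hα', hk]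
      field_simp
    rw [hratio, ← exp_nat_mul, ← exp_add, ← exp_add, hk, I, exp_eq_one_iff]
    ring
  have hsqrt : √(2 * k) = √(2 * (1 + α)) * √N := by
    rw [hk, ← mul_assoc, sqrt_mul (by positivity)]
  have hsqrtN : 0 < √(N : ℝ) := sqrt_pos.2 hN'
  calc poissonPMFReal N k * exp (N * I α) * √N
      = exp (k - N) * (N / k) ^ k * exp (N * I α) / (stirlingSeq k * √(2 * (1 + α))) := by
        rw [poissonPMFReal_eq_stirlingSeq _ hk0, NNReal.coe_natCast, hsqrt]
        field_simp
    _ = (stirlingSeq k * √(2 * (1 + α)))⁻¹ := by rw [hexp, one_div]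

section Asymptotics

variable {α : ℝ} {k : ℕ → ℕ}

lemma tendsto_poissonRatio (hα : -1 < α) (hk : ∀ N, (k N : ℝ) = (1 + α) * N) (i : ℕ) :
    Tendsto (fun N : ℕ => poissonRatio N (k N) i) atTop (𝓝 ((1 + α)⁻¹ ^ i)) := by
  induction i with
  | zero => simp [poissonRatio_zero]
  | succ i ih =>
    have hfactor : Tendsto (fun N : ℕ => (N : ℝ) / (k N + i + 1)) atTop (𝓝 (1 + α)⁻¹) := by
      have hden : Tendsto (fun N : ℕ => (1 + α) + ((i : ℝ) + 1) / N) atTop (𝓝 (1 + α)) := by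
        simpa using (tendsto_const_div_atTop_nhds_zero_nat ((i : ℝ) + 1)).const_add (1 + α)
      refine (hden.inv₀ (by linarith)).congr' ?_
      filter_upwards [eventually_ne_atTop 0] with N hN
      have hN' : (N : ℝ) ≠ 0 := Nat.cast_ne_zero.2 hN
      rw [hk]
      field_simp
      ring
    simpa only [poissonRatio_succ, pow_succ] using ih.mul hfactor

lemma tendsto_tsum_poissonRatio (hα : 0 < α) (hk : ∀ N, (k N : ℝ) = (1 + α) * N) :
    Tendsto (fun N : ℕ => ∑' i, poissonRatio N (k N) i) atTop (𝓝 ((1 + α) / α)) := by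
  have hr0 : (0 : ℝ) ≤ (1 + α)⁻¹ := by positivity
  have hr1 : (1 + α)⁻¹ < 1 := inv_lt_one_of_one_lt₀ (by linarith)
  have hgeom : ∑' i : ℕ, (1 + α)⁻¹ ^ i = (1 + α) / α := by
    rw [tsum_geometric_of_lt_one hr0 hr1]
    field_simp [hα.ne']
    ring
  rw [← hgeom]
  refine tendsto_tsum_of_dominated_convergence (summable_geometric_of_lt_one hr0 hr1)
    (tendsto_poissonRatio (by linarith) hk) (Eventually.of_forall fun N i => ?_)
  rw [Real.norm_of_nonneg (poissonRatio_nonneg N.cast_nonneg _ i)]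
  refine poissonRatio_le_pow N.cast_nonneg ?_ i
  rw [hk, mul_add, ← mul_assoc, inv_mul_cancel₀ (by linarith), one_mul]
  linarith [inv_pos.2 (show 0 < 1 + α by linarith)]

lemma tendsto_poissonPMFReal_mul_exp_mul_sqrt (hα : -1 < α)
    (hk : ∀ N, (k N : ℝ) = (1 + α) * N) :
    Tendsto (fun N : ℕ => poissonPMFReal N (k N) * exp (N * I α) * √N) atTop
      (𝓝 (√π * √(2 * (1 + α)))⁻¹) := by
  have hk_atTop : Tendsto k atTop atTop := by
    refine (tendsto_natCast_atTop_iff (R := ℝ)).1 ?_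
    simpa only [hk] using tendsto_natCast_atTop_atTop.const_mul_atTop (by linarith)
  have hlim_ne : √π * √(2 * (1 + α)) ≠ 0 :=
    mul_ne_zero (sqrt_ne_zero'.2 pi_pos) (sqrt_ne_zero'.2 (by linarith))
  refine ((tendsto_stirlingSeq_sqrt_pi.comp hk_atTop).mul_const _).inv₀ hlim_ne |>.congr' ?_
  filter_upwards [eventually_ne_atTop 0] with N hN
  exact (poissonPMFReal_mul_exp_mul_sqrt hα hN (hk N)).symm

end Asymptotics

/-- Bahadur–Rao exact asymptotics for the Poisson upper tail:
`P(Po(N) - N ≥ αN) · e^{N I(α)} · √N → √(1+α)/(α√(2π))`. -/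
theorem bahadur_rao_poisson (α : ℝ) (hα : 0 < α) (hlat : ∃ m : ℕ, (m : ℝ) = α) :
    Filter.Tendsto
      (fun N : ℕ =>
        (∑' j : {j : ℕ // (N : ℝ) + α * N ≤ (j : ℝ)}, poissonPMFReal (N : ℝ≥0) j) *
          Real.exp (N * I α) * Real.sqrt N)
      Filter.atTop
      (nhds (Real.sqrt (1 + α) / (α * Real.sqrt (2 * Real.pi)))) := by
  obtain ⟨m, rfl⟩ := hlat
  have hk : ∀ N : ℕ, ((N + m * N : ℕ) : ℝ) = (1 + m) * N := fun N => by push_cast; ring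
  have htail : ∀ N : ℕ,
      ∑' j : {j : ℕ // (N : ℝ) + m * N ≤ j}, poissonPMFReal N j =
        poissonPMFReal N (N + m * N) * ∑' i, poissonRatio N (N + m * N) i := fun N => by
    rw [show (N : ℝ) + m * N = ((N + m * N : ℕ) : ℝ) by push_cast; ring,
      tsum_subtype_natCast_le, ← tsum_mul_left]
    exact tsum_congr fun i => by rw [poissonPMFReal_add, NNReal.coe_natCast]
  have hconst : (√π * √(2 * (1 + m)))⁻¹ * ((1 + m) / m) = √(1 + m) / (m * √(2 * π)) := by
    have hm : (m : ℝ) ≠ 0 := hα.ne'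
    have hsq : √(1 + m) * √(1 + m) = (1 + m : ℝ) := mul_self_sqrt (by positivity)
    rw [sqrt_mul zero_le_two, sqrt_mul zero_le_two]
    field_simp
    linear_combination -hsq
  rw [← hconst]
  refine ((tendsto_poissonPMFReal_mul_exp_mul_sqrt (by linarith) hk).mul
    (tendsto_tsum_poissonRatio hα hk)).congr fun N => ?_
  rw [htail]
  ring
end

section
/- (Every cell is dense whp) Tile [0,√n]² into square cells of side r/√5 where r = √(a·ln n/π), and let the nodes be a unit-intensity Poisson point process. If a ≥ 5π/H(5πγ) with strict inequality and γ ∈ (0, 1/(5π)), then with probability tending to 1 as n → ∞, every cell contains at least γ·a·ln n points. -/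
open MeasureTheory ProbabilityTheory
open scoped NNReal ENNReal

/-- The square `[0,√n]²`. -/
noncomputable def square (n : ℕ) : Set (ℝ × ℝ) :=
  Set.Icc 0 (Real.sqrt n) ×ˢ Set.Icc 0 (Real.sqrt n)

/-- The axis-aligned square cell with indices `(i, j)` and side length `s`. -/
def cell (s : ℝ) (i j : ℕ) : Set (ℝ × ℝ) :=
  Set.Ico (i * s) ((i + 1) * s) ×ˢ Set.Ico (j * s) ((j + 1) * s)

/-- Index type for the independent sources: the number of points (`none`) and the point
locations (`some i`). -/
def SrcType : Option ℕ → Type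
  | none => ℕ
  | some _ => ℝ × ℝ

instance : ∀ j, MeasurableSpace (SrcType j)
  | none => inferInstanceAs (MeasurableSpace ℕ)
  | some _ => inferInstanceAs (MeasurableSpace (ℝ × ℝ))

def src {Ω : Type*} (K : Ω → ℕ) (X : ℕ → Ω → ℝ × ℝ) : ∀ j, Ω → SrcType j
  | none => K
  | some i => X i

/-!
Given `K = m`, the `m` independent uniform points fall into a cell `C` of area `A` independently
with probability `p = A / n`. Summing over `m` and over the set of indices of the points in `C`
gives the Chernoff bound
`P(N_C < t) ≤ e^{st} Σ_m P(K = m) (e^{-s} p + 1 - p)^m = e^{st + A(e^{-s} - 1)}`,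
the bound for a Poisson variable of mean `A`. With `e^{-s} = x = 5πγ` and `t = xA` this is
`e^{-A H(x)} = n^{-β}`, `β = a H(x) / (5π) > 1`. There are at most `n / A ≤ n` cells, so the union
bound leaves `n^{1-β} → 0`.
-/

open Finset Filter Topology
open scoped Nat

lemma hasSum_poisson_mul_pow (r : ℝ≥0) (z : ℝ) :
    HasSum (fun m : ℕ => Real.exp (-r) * r ^ m / m ! * z ^ m) (Real.exp (r * (z - 1))) := by
  have hterm : (fun m : ℕ => Real.exp (-r) * r ^ m / m ! * z ^ m)
      = fun m => Real.exp (-r) * ((r * z) ^ m / m !) := by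
    funext m
    ring
  have hsum : Real.exp (r * (z - 1)) = Real.exp (-r) * NormedSpace.exp ((r : ℝ) * z) := by
    rw [← Real.exp_eq_exp_ℝ, ← Real.exp_add]
    ring_nf
  rw [hterm, hsum]
  exact (NormedSpace.expSeries_div_hasSum_exp ((r : ℝ) * z)).mul_left (Real.exp (-r))

lemma prod_ite_mem_eq_pow_mul_pow {ι M : Type*} [DecidableEq ι] [CommMonoid M] {s S : Finset ι}
    (hS : S ⊆ s) (a b : M) :
    ∏ k ∈ s, (if k ∈ S then a else b) = a ^ #S * b ^ (#s - #S) := by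
  rw [prod_ite, filter_mem_eq_inter, inter_eq_right.2 hS, ← sdiff_eq_filter, prod_const,
    prod_const, card_sdiff_of_subset hS]

lemma sum_card_lt_pow_mul_pow_le {p s : ℝ} (hp0 : 0 ≤ p) (hp1 : p ≤ 1) (hs : 0 ≤ s) (t : ℝ)
    (m : ℕ) :
    ∑ S ∈ (range m).powerset with (#S : ℝ) < t, p ^ #S * (1 - p) ^ (m - #S)
      ≤ Real.exp (s * t) * (Real.exp (-s) * p + (1 - p)) ^ m := by
  have hp1' : 0 ≤ 1 - p := by linarith
  have hbinom := sum_pow_mul_eq_add_pow (Real.exp (-s) * p) (1 - p) (range m)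
  rw [card_range] at hbinom
  calc _ ≤ ∑ S ∈ (range m).powerset with (#S : ℝ) < t,
          Real.exp (s * t) * ((Real.exp (-s) * p) ^ #S * (1 - p) ^ (m - #S)) := by
        refine sum_le_sum fun S hS => ?_
        have hS : (#S : ℝ) ≤ t := (mem_filter.1 hS).2.le
        have hone : 1 ≤ Real.exp (s * t) * Real.exp (-s) ^ #S := by
          rw [← Real.exp_nat_mul, ← Real.exp_add]
          exact Real.one_le_exp (by nlinarith)
        calc p ^ #S * (1 - p) ^ (m - #S) = 1 * (p ^ #S * (1 - p) ^ (m - #S)) := (one_mul _).symm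
          _ ≤ Real.exp (s * t) * Real.exp (-s) ^ #S * (p ^ #S * (1 - p) ^ (m - #S)) := by
            gcongr
          _ = _ := by ring
    _ ≤ ∑ S ∈ (range m).powerset,
          Real.exp (s * t) * ((Real.exp (-s) * p) ^ #S * (1 - p) ^ (m - #S)) :=
        sum_le_sum_of_subset_of_nonneg (filter_subset _ _) fun _ _ _ => by positivity
    _ = _ := by rw [← mul_sum, hbinom]

lemma H_pos {x : ℝ} (h0 : 0 < x) (h1 : x < 1) : 0 < H x := by
  have hlog : Real.log x⁻¹ < x⁻¹ - 1 :=
    Real.log_lt_sub_one_of_pos (inv_pos.2 h0) (inv_ne_one.2 h1.ne)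
  rw [Real.log_inv] at hlog
  rw [H]
  nlinarith [mul_lt_mul_of_pos_left hlog h0, mul_inv_cancel₀ h0.ne']

noncomputable def pointCount {Ω : Type*} (K : Ω → ℕ) (X : ℕ → Ω → ℝ × ℝ) (C : Set (ℝ × ℝ))
    (ω : Ω) : ℕ :=
  Nat.card {k : ℕ // k < K ω ∧ X k ω ∈ C}

def patternEvent {Ω : Type*} (K : Ω → ℕ) (X : ℕ → Ω → ℝ × ℝ) (C : Set (ℝ × ℝ)) (m : ℕ)
    (S : Finset ℕ) : Set Ω :=
  K ⁻¹' {m} ∩ ⋂ k ∈ range m, X k ⁻¹' (if k ∈ S then C else Cᶜ)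

section Thinning

variable {Ω : Type*} {K : Ω → ℕ} {X : ℕ → Ω → ℝ × ℝ}

open Classical in
lemma pointCount_eq_card_filter (C : Set (ℝ × ℝ)) (ω : Ω) :
    pointCount K X C ω = #{k ∈ range (K ω) | X k ω ∈ C} := by
  rw [pointCount, ← Nat.card_eq_finsetCard]
  exact Nat.card_congr (Equiv.subtypeEquivRight fun k => by simp)

open Classical in
lemma setOf_pointCount_lt_subset (C : Set (ℝ × ℝ)) (t : ℝ) :
    {ω | (pointCount K X C ω : ℝ) < t}
      ⊆ ⋃ m, ⋃ S ∈ (range m).powerset.filter (fun S => (#S : ℝ) < t), patternEvent K X C m S := by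
  intro ω hω
  simp only [Set.mem_iUnion]
  refine ⟨K ω, {k ∈ range (K ω) | X k ω ∈ C},
    mem_filter.2 ⟨mem_powerset.2 (filter_subset _ _), ?_⟩, rfl, ?_⟩
  · rwa [← pointCount_eq_card_filter]
  · simp only [Set.mem_iInter]
    intro k hk
    by_cases h : X k ω ∈ C <;> simp_all

variable [MeasurableSpace Ω] {P : Measure Ω}

lemma _root_.ProbabilityTheory.HasLaw.measure_preimage {β : Type*} [MeasurableSpace β]
    {μ : Measure β} {Y : Ω → β} (h : HasLaw Y μ P) {D : Set β} (hD : MeasurableSet D) :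
    P (Y ⁻¹' D) = μ D :=
  h.measure_eq (p := (· ∈ D)) hD

lemma _root_.ProbabilityTheory.HasLaw.of_map_eq {β : Type*} [MeasurableSpace β] {μ : Measure β}
    [IsProbabilityMeasure μ] {Y : Ω → β} (h : P.map Y = μ) : HasLaw Y μ P :=
  ⟨.of_map_ne_zero (h ▸ IsProbabilityMeasure.ne_zero μ), h⟩

lemma measure_inter_biInter_preimage_eq_mul (hind : iIndepFun (src K X) P) {A : Set ℕ}
    (hA : MeasurableSet A) {D : ℕ → Set (ℝ × ℝ)} (hD : ∀ k, MeasurableSet (D k)) (m : ℕ) :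
    P (K ⁻¹' A ∩ ⋂ k ∈ range m, X k ⁻¹' D k)
      = P (K ⁻¹' A) * ∏ k ∈ range m, P (X k ⁻¹' D k) := by
  let sets : ∀ j, Set (SrcType j)
    | none => A
    | some k => D k
  have h := hind.measure_inter_preimage_eq_mul (insert none ((range m).image some))
    (sets := sets) fun
      | none, _ => hA
      | some k, _ => hD k
  rwa [set_biInter_insert, set_biInter_finset_image, prod_insert (by simp),
    prod_image (by simp)] at h

variable [IsProbabilityMeasure P] {r : ℝ≥0} {μ : Measure (ℝ × ℝ)} {C : Set (ℝ × ℝ)}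

lemma measure_patternEvent (hind : iIndepFun (src K X) P) (hK : HasLaw K (poissonMeasure r) P)
    (hX : ∀ k, HasLaw (X k) μ P) (hC : MeasurableSet C) {m : ℕ} {S : Finset ℕ}
    (hS : S ⊆ range m) :
    P (patternEvent K X C m S) = ENNReal.ofReal
      (Real.exp (-r) * r ^ m / m ! * (μ.real C ^ #S * (1 - μ.real C) ^ (m - #S))) := by
  have := (hX 0).isProbabilityMeasure_iff.1 ‹_›
  have hD : ∀ k, MeasurableSet (if k ∈ S then C else Cᶜ) := fun k => by
    split_ifs
    exacts [hC, hC.compl]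
  have hXD : ∀ k, P (X k ⁻¹' (if k ∈ S then C else Cᶜ))
      = ENNReal.ofReal (if k ∈ S then μ.real C else 1 - μ.real C) := fun k => by
    rw [← probReal_compl_eq_one_sub hC, ← apply_ite μ.real, ofReal_measureReal]
    exact (hX k).measure_preimage (hD k)
  rw [patternEvent, measure_inter_biInter_preimage_eq_mul hind (measurableSet_singleton m) hD,
    hK.measure_preimage (measurableSet_singleton m), poissonMeasure_singleton,
    prod_congr rfl fun k _ => hXD k,
    ← ENNReal.ofReal_prod_of_nonneg fun k _ => by split_ifs <;> simp [measureReal_le_one],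
    prod_ite_mem_eq_pow_mul_pow hS, card_range, ← ENNReal.ofReal_mul (by positivity)]

lemma measure_pointCount_lt_le (hind : iIndepFun (src K X) P)
    (hK : HasLaw K (poissonMeasure r) P) (hX : ∀ k, HasLaw (X k) μ P) (hC : MeasurableSet C)
    (t : ℝ) {s : ℝ} (hs : 0 ≤ s) :
    P {ω | (pointCount K X C ω : ℝ) < t}
      ≤ ENNReal.ofReal (Real.exp (s * t + r * μ.real C * (Real.exp (-s) - 1))) := by
  have := (hX 0).isProbabilityMeasure_iff.1 ‹_›
  set p := μ.real C
  set q := Real.exp (-s) * p + (1 - p) with hq_def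
  have hp1 : p ≤ 1 := measureReal_le_one
  have hq : HasSum (fun m : ℕ => Real.exp (s * t) * (Real.exp (-r) * r ^ m / m ! * q ^ m))
      (Real.exp (s * t) * Real.exp (r * (q - 1))) :=
    (hasSum_poisson_mul_pow r q).mul_left _
  calc P {ω | (pointCount K X C ω : ℝ) < t}
      ≤ ∑' m, ∑ S ∈ (range m).powerset with (#S : ℝ) < t, P (patternEvent K X C m S) :=
        (measure_mono (setOf_pointCount_lt_subset C t)).trans <| (measure_iUnion_le _).trans <|
          ENNReal.tsum_le_tsum fun m => measure_biUnion_finset_le _ _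
    _ = ∑' m : ℕ, ENNReal.ofReal (Real.exp (-r) * r ^ m / m ! *
          ∑ S ∈ (range m).powerset with (#S : ℝ) < t, p ^ #S * (1 - p) ^ (m - #S)) := by
        refine tsum_congr fun m => ?_
        rw [mul_sum, ENNReal.ofReal_sum_of_nonneg fun S _ => by
          have : 0 ≤ 1 - p := by linarith
          positivity]
        exact sum_congr rfl fun S hS =>
          measure_patternEvent hind hK hX hC (mem_powerset.1 (mem_filter.1 hS).1)
    _ ≤ ∑' m : ℕ, ENNReal.ofReal (Real.exp (s * t) * (Real.exp (-r) * r ^ m / m ! * q ^ m)) := by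
        refine ENNReal.tsum_le_tsum fun m => ENNReal.ofReal_le_ofReal ?_
        rw [mul_left_comm]
        exact mul_le_mul_of_nonneg_left
          (sum_card_lt_pow_mul_pow_le measureReal_nonneg hp1 hs t m) (by positivity)
    _ = ENNReal.ofReal (Real.exp (s * t) * Real.exp (r * (q - 1))) := by
        rw [← ENNReal.ofReal_tsum_of_nonneg (fun m => ?_) hq.summable, hq.tsum_eq]
        have : 0 ≤ q := add_nonneg (by positivity) (by linarith)
        positivity
    _ = _ := by
        rw [← Real.exp_add, hq_def]
        ring_nf

lemma measure_pointCount_lt_le_exp_neg_H (hind : iIndepFun (src K X) P)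
    (hK : HasLaw K (poissonMeasure r) P) (hX : ∀ k, HasLaw (X k) μ P) (hC : MeasurableSet C)
    {x : ℝ} (hx0 : 0 < x) (hx1 : x ≤ 1) :
    P {ω | (pointCount K X C ω : ℝ) < x * (r * μ.real C)}
      ≤ ENNReal.ofReal (Real.exp (-(r * μ.real C * H x))) := by
  have h := measure_pointCount_lt_le hind hK hX hC (x * (r * μ.real C))
    (neg_nonneg.2 (Real.log_nonpos hx0.le hx1))
  rw [neg_neg, Real.exp_log hx0] at h
  convert h using 3
  rw [H]
  ring

end Thinning

noncomputable def uniformSquare (n : ℕ) : Measure (ℝ × ℝ) :=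
  (n : ℝ≥0∞)⁻¹ • volume.restrict (square n)

lemma volume_square (n : ℕ) : volume (square n) = n := by
  rw [square, Measure.volume_eq_prod, Measure.prod_prod, Real.volume_Icc, sub_zero,
    ← ENNReal.ofReal_mul (Real.sqrt_nonneg _), Real.mul_self_sqrt n.cast_nonneg,
    ENNReal.ofReal_natCast]

lemma isProbabilityMeasure_uniformSquare {n : ℕ} (hn : n ≠ 0) :
    IsProbabilityMeasure (uniformSquare n) :=
  ⟨by rw [uniformSquare, Measure.smul_apply, Measure.restrict_apply_univ, volume_square,
    smul_eq_mul, ENNReal.inv_mul_cancel (by exact_mod_cast hn) (ENNReal.natCast_ne_top n)]⟩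

lemma uniformSquare_real_of_subset {n : ℕ} {D : Set (ℝ × ℝ)} (hD : D ⊆ square n) :
    (uniformSquare n).real D = volume.real D / n := by
  rw [uniformSquare, measureReal_def, Measure.smul_apply, Measure.restrict_eq_self _ hD,
    smul_eq_mul, ENNReal.toReal_mul, ENNReal.toReal_inv, ENNReal.toReal_natCast, measureReal_def,
    div_eq_inv_mul]

lemma measurableSet_cell (s : ℝ) (i j : ℕ) : MeasurableSet (cell s i j) :=
  measurableSet_Ico.prod measurableSet_Ico

lemma volume_real_cell {s : ℝ} (hs : 0 ≤ s) (i j : ℕ) : volume.real (cell s i j) = s * s := by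
  rw [measureReal_def, cell, Measure.volume_eq_prod, Measure.prod_prod, Real.volume_Ico,
    Real.volume_Ico, ← ENNReal.ofReal_mul (by linarith), ENNReal.toReal_ofReal (by nlinarith)]
  ring

lemma cell_subset_square {n : ℕ} {s : ℝ} (hs : 0 ≤ s) {i j : ℕ} (hi : (i + 1) * s ≤ √n)
    (hj : (j + 1) * s ≤ √n) : cell s i j ⊆ square n := by
  rintro ⟨u, v⟩ ⟨⟨hu0, hu1⟩, hv0, hv1⟩
  exact ⟨⟨(by positivity : (0 : ℝ) ≤ i * s).trans hu0, hu1.le.trans hi⟩,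
    ⟨(by positivity : (0 : ℝ) ≤ j * s).trans hv0, hv1.le.trans hj⟩⟩

lemma lt_floor_div_iff_add_one_mul_le {s y : ℝ} (hs : 0 < s) (hy : 0 ≤ y) (i : ℕ) :
    i < ⌊y / s⌋₊ ↔ (i + 1) * s ≤ y := by
  rw [Nat.lt_iff_add_one_le, Nat.le_floor_iff (by positivity), le_div_iff₀ hs]
  push_cast
  rfl

lemma measure_compl_setOf_forall_cell_le {Ω : Type*} [MeasurableSpace Ω] {P : Measure Ω}
    [IsProbabilityMeasure P] {K : Ω → ℕ} {X : ℕ → Ω → ℝ × ℝ} {n : ℕ} (hn : n ≠ 0)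
    (hind : iIndepFun (src K X) P) (hK : HasLaw K (poissonMeasure n) P)
    (hX : ∀ k, HasLaw (X k) (uniformSquare n) P) {s : ℝ} (hs : 1 ≤ s) {x : ℝ} (hx0 : 0 < x)
    (hx1 : x ≤ 1) :
    P {ω | ∀ i j : ℕ, (i + 1) * s ≤ √n → (j + 1) * s ≤ √n →
        x * (s * s) ≤ (pointCount K X (cell s i j) ω : ℝ)}ᶜ
      ≤ n * ENNReal.ofReal (Real.exp (-(s * s * H x))) := by
  have hs0 : 0 < s := by linarith
  set M := ⌊√n / s⌋₊
  have hM : ∀ i, i < M ↔ (i + 1) * s ≤ √n :=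
    lt_floor_div_iff_add_one_mul_le hs0 (Real.sqrt_nonneg _)
  have hMM : M * M ≤ n := by
    have hM' : (M : ℝ) ≤ √n / s := Nat.floor_le (by positivity)
    have : (M : ℝ) * M ≤ n := calc
      (M : ℝ) * M ≤ (√n / s) * (√n / s) := mul_le_mul hM' hM' M.cast_nonneg (by positivity)
      _ = n / (s * s) := by rw [div_mul_div_comm, Real.mul_self_sqrt n.cast_nonneg]
      _ ≤ n := div_le_self n.cast_nonneg (by nlinarith)
    exact_mod_cast this
  have hcell : ∀ q ∈ range M ×ˢ range M,
      P {ω | (pointCount K X (cell s q.1 q.2) ω : ℝ) < x * (s * s)}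
        ≤ ENNReal.ofReal (Real.exp (-(s * s * H x))) := by
    rintro ⟨i, j⟩ hq
    obtain ⟨hi, hj⟩ := mem_product.1 hq
    have hμ : (n : ℝ) * (uniformSquare n).real (cell s i j) = s * s := by
      rw [uniformSquare_real_of_subset (cell_subset_square hs0.le ((hM i).1 (mem_range.1 hi))
        ((hM j).1 (mem_range.1 hj))), volume_real_cell hs0.le, mul_div_cancel₀ _ (by simpa)]
    have := measure_pointCount_lt_le_exp_neg_H hind hK hX (measurableSet_cell s i j) hx0 hx1
    rwa [NNReal.coe_natCast, hμ] at this
  calc _ ≤ P (⋃ q ∈ range M ×ˢ range M,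
        {ω | (pointCount K X (cell s q.1 q.2) ω : ℝ) < x * (s * s)}) := by
        refine measure_mono fun ω hω => ?_
        obtain ⟨i, j, hi, hj, hlt⟩ : ∃ i j : ℕ, (i + 1) * s ≤ √n ∧ (j + 1) * s ≤ √n ∧
            (pointCount K X (cell s i j) ω : ℝ) < x * (s * s) := by
          simpa using hω
        exact Set.mem_biUnion (x := (i, j))
          (mem_product.2 ⟨mem_range.2 ((hM i).2 hi), mem_range.2 ((hM j).2 hj)⟩) hlt
    _ ≤ ∑ q ∈ range M ×ˢ range M, ENNReal.ofReal (Real.exp (-(s * s * H x))) :=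
        (measure_biUnion_finset_le _ _).trans (sum_le_sum hcell)
    _ ≤ n * ENNReal.ofReal (Real.exp (-(s * s * H x))) := by
        rw [sum_const, card_product, card_range, nsmul_eq_mul]
        gcongr

lemma tendsto_natCast_mul_exp_neg_mul_log {c : ℝ} (hc : 1 < c) :
    Tendsto (fun n : ℕ => (n : ℝ≥0∞) * ENNReal.ofReal (Real.exp (-(c * Real.log n))))
      atTop (𝓝 0) := by
  have h : Tendsto (fun n : ℕ => Real.exp ((1 - c) * Real.log n)) atTop (𝓝 0) :=
    Real.tendsto_exp_atBot.comp <| (Real.tendsto_log_atTop.comp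
      tendsto_natCast_atTop_atTop).const_mul_atTop_of_neg (by linarith)
  have h' : Tendsto (fun n : ℕ => ENNReal.ofReal (Real.exp ((1 - c) * Real.log n)))
      atTop (𝓝 0) := by
    simpa using ENNReal.tendsto_ofReal h
  refine h'.congr' ?_
  filter_upwards [eventually_gt_atTop 0] with n hn
  rw [← ENNReal.ofReal_natCast, ← ENNReal.ofReal_mul n.cast_nonneg,
    show (1 - c) * Real.log n = Real.log n + -(c * Real.log n) by ring, Real.exp_add,
    Real.exp_log (by positivity)]

lemma tendsto_measure_of_tendsto_measure_compl {ι : Type*} {l : Filter ι} {Ω : ι → Type*}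
    [∀ n, MeasurableSpace (Ω n)] {P : ∀ n, Measure (Ω n)} [∀ n, IsProbabilityMeasure (P n)]
    {G : ∀ n, Set (Ω n)} (h : Tendsto (fun n => P n (G n)ᶜ) l (𝓝 0)) :
    Tendsto (fun n => P n (G n)) l (𝓝 1) := by
  have hlow : Tendsto (fun n => 1 - P n (G n)ᶜ) l (𝓝 1) := by
    simpa using ENNReal.Tendsto.sub tendsto_const_nhds h (Or.inl ENNReal.one_ne_top)
  refine tendsto_of_tendsto_of_tendsto_of_le_of_le hlow tendsto_const_nhds (fun n => ?_)
    fun n => prob_le_one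
  rw [tsub_le_iff_right, ← measure_univ (μ := P n), ← Set.union_compl_self (G n)]
  exact measure_union_le _ _

/-- Every cell of the tiling of `[0,√n]²` into squares of side `r/√5`,
`r = √(a ln n/π)`, contains at least `γ a ln n` points of a unit-intensity Poisson
point process, whp, provided `a > 5π/H(5πγ)` and `γ ∈ (0, 1/(5π))`. -/
theorem every_cell_dense (a γ : ℝ) (hγ0 : 0 < γ) (hγ1 : γ < 1 / (5 * Real.pi))
    (haH : 5 * Real.pi / H (5 * Real.pi * γ) < a)
    (Ω : ℕ → Type) (mΩ : ∀ n, MeasurableSpace (Ω n)) (P : ∀ n, Measure (Ω n))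
    (hP : ∀ n, IsProbabilityMeasure (P n))
    (K : ∀ n, Ω n → ℕ) (X : ∀ n, ℕ → Ω n → ℝ × ℝ)
    (hindep : ∀ n, iIndepFun (src (K n) (X n)) (P n))
    (hK : ∀ n : ℕ, Measure.map (K n) (P n) = poissonMeasure (n : ℝ≥0))
    (hX : ∀ (n i : ℕ), 0 < n →
      Measure.map (X n i) (P n) = (n : ℝ≥0∞)⁻¹ • volume.restrict (square n)) :
    Filter.Tendsto
      (fun n : ℕ => P n
        {ω : Ω n |
          ∀ i j : ℕ,
            ((i : ℝ) + 1) * Real.sqrt (a * Real.log n / (5 * Real.pi)) ≤ Real.sqrt n →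
            ((j : ℝ) + 1) * Real.sqrt (a * Real.log n / (5 * Real.pi)) ≤ Real.sqrt n →
            γ * a * Real.log n ≤
              (Nat.card {k : ℕ // k < K n ω ∧
                X n k ω ∈ cell (Real.sqrt (a * Real.log n / (5 * Real.pi))) i j} : ℝ)})
      Filter.atTop (nhds 1) := by
  have h5π : 0 < 5 * Real.pi := by positivity
  set x := 5 * Real.pi * γ with hx
  have hx1 : x < 1 := by rw [lt_div_iff₀ h5π] at hγ1; linarith
  have hHx : 0 < H x := H_pos (by positivity) hx1
  have ha : 0 < a := (div_pos h5π hHx).trans haH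
  set β := a * H x / (5 * Real.pi) with hβ_def
  have hβ : 1 < β := by rw [lt_div_iff₀ h5π, one_mul]; exact (div_lt_iff₀ hHx).1 haH
  have hlog : Tendsto (fun n : ℕ => Real.log n) atTop atTop :=
    Real.tendsto_log_atTop.comp tendsto_natCast_atTop_atTop
  refine tendsto_measure_of_tendsto_measure_compl (tendsto_of_tendsto_of_tendsto_of_le_of_le'
    tendsto_const_nhds (tendsto_natCast_mul_exp_neg_mul_log hβ)
    (Eventually.of_forall fun _ => zero_le) ?_)
  filter_upwards [((hlog.const_mul_atTop ha).atTop_div_const h5π).eventually_ge_atTop 1,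
    eventually_gt_atTop 0] with n hA hn
  set s := √(a * Real.log n / (5 * Real.pi))
  have hss : s * s = a * Real.log n / (5 * Real.pi) := Real.mul_self_sqrt (zero_le_one.trans hA)
  have ht : γ * a * Real.log n = x * (s * s) := by
    rw [hss, hx]
    field_simp
  have hexp : s * s * H x = β * Real.log n := by
    rw [hss, hβ_def]
    ring
  have := isProbabilityMeasure_uniformSquare hn.ne'
  simp only [ht]
  exact (measure_compl_setOf_forall_cell_le hn.ne' (hindep n) (.of_map_eq (hK n))
    (fun k => .of_map_eq (hX n k hn)) (Real.one_le_sqrt.2 hA) (by positivity) hx1.le).trans_eq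
    (by rw [hexp])
end
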